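/- Let T ∈ B(H), T' ∈ B(H'), and a contraction T2 ∈ B(H, H') with T2 T = T' T2. Suppose S ∈ B(H, H2) and S' ∈ B(H', H2') satisfy T* T + S* S = I_H and T'* T' + S'* S'= I_{H'}. Then there exist bounded operators A : H → H2' and B : H2 → H2' such that A T + B S = S' T2 and the block operator Y = [[T2, 0], [A, B]] : H ⊕ H2 → H' ⊕ H2' satisfies Y V = V' Y where V = [[T, 0], [S, 0]] and V' = [[T', 0], [S', 0]], and ‖Y‖ = ‖T2‖. -/

import Mathlib

/-!
Let `K = H ⊕ H2`, `W = T2 ∘ pr₁ : K → H'` and `c = ‖T2‖`. The defect operator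
`D = (c² - W* W)^{1/2}` satisfies `‖W z‖² + ‖D z‖² = c² ‖z‖²`. As `V = [T; S]` is isometric and
`T' T2 = T2 T`, for `x ∈ H`
`‖S' T2 x‖² = ‖T2 x‖² - ‖T2 T x‖² ≤ c² ‖V x‖² - ‖W V x‖² = ‖D V x‖²`,
so Douglas' lemma gives a contraction `C` with `S' T2 = C D V`. The row `R = C D = [A B]` then
satisfies `A T + B S = R V = S' T2`, and `‖Y z‖² = ‖W z‖² + ‖R z‖² ≤ c² ‖z‖²`; conversely
`‖T2‖ ≤ ‖Y‖` because `T2` is a corner of `Y`.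
-/

open ContinuousLinearMap

/-- The lower-triangular block operator `[[f, 0], [g, h]]` on the Hilbert (ℓ²) direct sum. -/
noncomputable def blockLowerTriangular {E1 E2 F1 F2 : Type*}
    [NormedAddCommGroup E1] [NormedSpace ℂ E1] [NormedAddCommGroup E2] [NormedSpace ℂ E2]
    [NormedAddCommGroup F1] [NormedSpace ℂ F1] [NormedAddCommGroup F2] [NormedSpace ℂ F2]
    (f : E1 →L[ℂ] F1) (g : E1 →L[ℂ] F2) (h : E2 →L[ℂ] F2) :
    WithLp 2 (E1 × E2) →L[ℂ] WithLp 2 (F1 × F2) :=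
  ((WithLp.prodContinuousLinearEquiv 2 ℂ F1 F2).symm : (F1 × F2) →L[ℂ] WithLp 2 (F1 × F2)) ∘L
    ((f ∘L fst ℂ E1 E2).prod (g ∘L fst ℂ E1 E2 + h ∘L snd ℂ E1 E2)) ∘L
      ((WithLp.prodContinuousLinearEquiv 2 ℂ E1 E2) : WithLp 2 (E1 × E2) →L[ℂ] E1 × E2)

section Hilbert

variable {𝕜 E F G : Type*} [RCLike 𝕜]
  [NormedAddCommGroup F] [InnerProductSpace 𝕜 F] [CompleteSpace F]
  [NormedAddCommGroup G] [NormedSpace 𝕜 G] [CompleteSpace G]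

theorem Submodule.exists_extension_opNorm_le (p : Submodule 𝕜 F) (φ : p →L[𝕜] G) :
    ∃ C : F →L[𝕜] G, ‖C‖ ≤ ‖φ‖ ∧ ∀ y : p, C y = φ y := by
  set M := p.topologicalClosure
  have : CompleteSpace M := p.isClosed_topologicalClosure.completeSpace_coe
  let e : p →ₗᵢ[𝕜] M := ⟨Submodule.inclusion p.le_topologicalClosure, fun _ => rfl⟩
  have he : DenseRange e :=
    (denseRange_inclusion_iff (t := (M : Set F)) p.le_topologicalClosure).mpr
      p.topologicalClosure_coe.subset
  have he' : IsUniformInducing e.toContinuousLinearMap := e.isometry.isUniformInducing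
  refine ⟨φ.extend e.toContinuousLinearMap ∘L M.orthogonalProjectionOnto, ?_, fun y => ?_⟩
  · calc ‖φ.extend e.toContinuousLinearMap ∘L M.orthogonalProjectionOnto‖
        ≤ ‖φ.extend e.toContinuousLinearMap‖ * ‖M.orthogonalProjectionOnto‖ := opNorm_comp_le _ _
      _ ≤ (1 : NNReal) * ‖φ‖ * 1 := by
        gcongr
        · exact opNorm_extend_le φ he (N := 1) fun y => by simp
        · exact M.orthogonalProjectionOnto_norm_le
      _ = ‖φ‖ := by simp
  · have : M.orthogonalProjectionOnto (y : F) = e y :=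
      M.orthogonalProjectionOnto_mem_subspace_eq_self (e y)
    rw [comp_apply, this]
    exact extend_eq φ he he' y

theorem LinearMap.exists_contraction_comp_eq_of_norm_apply_le [AddCommGroup E] [Module 𝕜 E]
    (g : E →ₗ[𝕜] F) (f : E →ₗ[𝕜] G) (h : ∀ x, ‖f x‖ ≤ ‖g x‖) :
    ∃ C : F →L[𝕜] G, ‖C‖ ≤ 1 ∧ ∀ x, C (g x) = f x := by
  have hker : LinearMap.ker g ≤ LinearMap.ker f := fun x hx =>
    norm_le_zero_iff.mp ((h x).trans_eq (by simpa using hx))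
  obtain ⟨φ, hφ⟩ : ∃ φ : LinearMap.range g →ₗ[𝕜] G,
      ∀ x, φ ⟨g x, LinearMap.mem_range_self g x⟩ = f x :=
    ⟨(LinearMap.ker g).liftQ f hker ∘ₗ g.quotKerEquivRange.symm.toLinearMap, fun x => by
      simp [LinearMap.quotKerEquivRange_symm_apply_image]⟩
  have hφ_le : ∀ y, ‖φ y‖ ≤ 1 * ‖y‖ := by
    rintro ⟨_, x, rfl⟩
    simpa [hφ] using h x
  obtain ⟨C, hC, hCφ⟩ := (LinearMap.range g).exists_extension_opNorm_le (φ.mkContinuous 1 hφ_le)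
  refine ⟨C, hC.trans (LinearMap.mkContinuous_norm_le _ zero_le_one _), fun x => ?_⟩
  simpa [hφ] using hCφ ⟨g x, LinearMap.mem_range_self g x⟩

end Hilbert

theorem ContinuousLinearMap.norm_sq_add_norm_sq_of_adjoint_comp_add_adjoint_comp_eq_one
    {𝕜 E F G : Type*} [RCLike 𝕜]
    [NormedAddCommGroup E] [InnerProductSpace 𝕜 E] [CompleteSpace E]
    [NormedAddCommGroup F] [InnerProductSpace 𝕜 F] [CompleteSpace F]
    [NormedAddCommGroup G] [InnerProductSpace 𝕜 G] [CompleteSpace G]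
    {T : E →L[𝕜] F} {S : E →L[𝕜] G} (h : adjoint T ∘L T + adjoint S ∘L S = 1) (x : E) :
    ‖T x‖ ^ 2 + ‖S x‖ ^ 2 = ‖x‖ ^ 2 := by
  rw [apply_norm_sq_eq_inner_adjoint_left, apply_norm_sq_eq_inner_adjoint_left, ← map_add,
    ← inner_add_left, ← add_apply, h, one_apply_eq_self, inner_self_eq_norm_sq]

theorem ContinuousLinearMap.exists_norm_sq_add_norm_sq_eq_of_norm_le {K F : Type*}
    [NormedAddCommGroup K] [InnerProductSpace ℂ K] [CompleteSpace K]
    [NormedAddCommGroup F] [InnerProductSpace ℂ F] [CompleteSpace F]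
    (W : K →L[ℂ] F) {c : ℝ} (hW : ‖W‖ ≤ c) :
    ∃ D : K →L[ℂ] K, ∀ z, ‖W z‖ ^ 2 + ‖D z‖ ^ 2 = c ^ 2 * ‖z‖ ^ 2 := by
  set Δ : K →L[ℂ] K := algebraMap ℝ _ (c ^ 2) - adjoint W ∘L W
  have hΔ : 0 ≤ Δ := by
    rw [sub_nonneg, ← CStarAlgebra.norm_le_iff_le_algebraMap _ (sq_nonneg c)
      ((nonneg_iff_isPositive _).mpr (isPositive_adjoint_comp_self W)),
      norm_adjoint_comp_self, ← sq]
    gcongr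
  refine ⟨CFC.sqrt Δ, fun z => ?_⟩
  have hD : adjoint (CFC.sqrt Δ) ∘L CFC.sqrt Δ = Δ := by
    rw [← star_eq_adjoint, (IsSelfAdjoint.of_nonneg (CFC.sqrt_nonneg Δ)).star_eq]
    exact CFC.sqrt_mul_sqrt_self Δ hΔ
  rw [apply_norm_sq_eq_inner_adjoint_left, apply_norm_sq_eq_inner_adjoint_left, hD, ← map_add,
    ← inner_add_left, ← add_apply, add_sub_cancel, Algebra.algebraMap_eq_smul_one, smul_apply,
    one_apply_eq_self, RCLike.real_smul_eq_coe_smul (K := ℂ), inner_smul_real_left,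
    RCLike.smul_re, inner_self_eq_norm_sq]

theorem ContinuousLinearMap.exists_comp_eq_of_norm_sq_add_norm_sq_le {E K F G : Type*}
    [NormedAddCommGroup E] [NormedSpace ℂ E]
    [NormedAddCommGroup K] [InnerProductSpace ℂ K] [CompleteSpace K]
    [NormedAddCommGroup F] [InnerProductSpace ℂ F] [CompleteSpace F]
    [NormedAddCommGroup G] [NormedSpace ℂ G] [CompleteSpace G]
    (W : K →L[ℂ] F) (V : E →L[ℂ] K) (f : E →L[ℂ] G) {c : ℝ} (hW : ‖W‖ ≤ c)
    (h : ∀ x, ‖W (V x)‖ ^ 2 + ‖f x‖ ^ 2 ≤ c ^ 2 * ‖V x‖ ^ 2) :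
    ∃ R : K →L[ℂ] G, R ∘L V = f ∧ ∀ z, ‖W z‖ ^ 2 + ‖R z‖ ^ 2 ≤ c ^ 2 * ‖z‖ ^ 2 := by
  obtain ⟨D, hD⟩ := W.exists_norm_sq_add_norm_sq_eq_of_norm_le hW
  have hfD : ∀ x, ‖f x‖ ≤ ‖D (V x)‖ := fun x => by
    rw [← pow_le_pow_iff_left₀ (norm_nonneg _) (norm_nonneg _) two_ne_zero]
    linarith [h x, hD (V x)]
  obtain ⟨C, hC, hCDV⟩ :=
    (D ∘L V : E →ₗ[ℂ] K).exists_contraction_comp_eq_of_norm_apply_le (f : E →ₗ[ℂ] G) hfD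
  refine ⟨C ∘L D, ext hCDV, fun z => ?_⟩
  rw [← hD z]
  gcongr
  exact (C.le_opNorm _).trans (mul_le_of_le_one_left (norm_nonneg _) hC)

namespace WithLp

open scoped ENNReal

variable (p : ℝ≥0∞) (𝕜 E1 E2 : Type*) [Semiring 𝕜]
  [TopologicalSpace E1] [AddCommGroup E1] [Module 𝕜 E1]
  [TopologicalSpace E2] [AddCommGroup E2] [Module 𝕜 E2]

def inlL : E1 →L[𝕜] WithLp p (E1 × E2) :=
  ((prodContinuousLinearEquiv p 𝕜 E1 E2).symm : E1 × E2 →L[𝕜] WithLp p (E1 × E2)) ∘L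
    inl 𝕜 E1 E2

def inrL : E2 →L[𝕜] WithLp p (E1 × E2) :=
  ((prodContinuousLinearEquiv p 𝕜 E1 E2).symm : E1 × E2 →L[𝕜] WithLp p (E1 × E2)) ∘L
    inr 𝕜 E1 E2

variable {p 𝕜 E1 E2}

theorem inlL_add_inrL (x : E1) (y : E2) :
    inlL p 𝕜 E1 E2 x + inrL p 𝕜 E1 E2 y = toLp p (x, y) := by
  rw [WithLp.ext_iff]
  ext <;> simp [inlL, inrL]

end WithLp

section Block

variable {E1 E2 F1 F2 G1 G2 : Type*}
  [NormedAddCommGroup E1] [NormedSpace ℂ E1] [NormedAddCommGroup E2] [NormedSpace ℂ E2]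
  [NormedAddCommGroup F1] [NormedSpace ℂ F1] [NormedAddCommGroup F2] [NormedSpace ℂ F2]
  [NormedAddCommGroup G1] [NormedSpace ℂ G1] [NormedAddCommGroup G2] [NormedSpace ℂ G2]

theorem blockLowerTriangular_apply (f : E1 →L[ℂ] F1) (g : E1 →L[ℂ] F2) (h : E2 →L[ℂ] F2)
    (z : WithLp 2 (E1 × E2)) :
    blockLowerTriangular f g h z = WithLp.toLp 2 (f z.fst, g z.fst + h z.snd) := rfl

theorem blockLowerTriangular_comp (f : E1 →L[ℂ] F1) (g : E1 →L[ℂ] F2) (h : E2 →L[ℂ] F2)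
    (f' : F1 →L[ℂ] G1) (g' : F1 →L[ℂ] G2) (h' : F2 →L[ℂ] G2) :
    blockLowerTriangular f' g' h' ∘L blockLowerTriangular f g h =
      blockLowerTriangular (f' ∘L f) (g' ∘L f + h' ∘L g) (h' ∘L h) := by
  ext z
  simp [blockLowerTriangular_apply, add_assoc]

theorem norm_le_norm_blockLowerTriangular (f : E1 →L[ℂ] F1) (g : E1 →L[ℂ] F2)
    (h : E2 →L[ℂ] F2) : ‖f‖ ≤ ‖blockLowerTriangular f g h‖ :=
  opNorm_le_bound _ (norm_nonneg _) fun x => calc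
    ‖f x‖ ≤ ‖blockLowerTriangular f g h (WithLp.inlL 2 ℂ E1 E2 x)‖ := by
      simpa [blockLowerTriangular_apply, WithLp.inlL] using
        WithLp.norm_fst_le _ (blockLowerTriangular f g h (WithLp.inlL 2 ℂ E1 E2 x))
    _ ≤ ‖blockLowerTriangular f g h‖ * ‖x‖ := by
      simpa [WithLp.inlL] using (blockLowerTriangular f g h).le_opNorm (WithLp.inlL 2 ℂ E1 E2 x)

theorem norm_blockLowerTriangular_comp_inlL_comp_inrL_le (f : E1 →L[ℂ] F1)
    (R : WithLp 2 (E1 × E2) →L[ℂ] F2) {c : ℝ} (hc : 0 ≤ c)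
    (h : ∀ z, ‖f z.fst‖ ^ 2 + ‖R z‖ ^ 2 ≤ c ^ 2 * ‖z‖ ^ 2) :
    ‖blockLowerTriangular f (R ∘L WithLp.inlL 2 ℂ E1 E2) (R ∘L WithLp.inrL 2 ℂ E1 E2)‖ ≤ c := by
  refine opNorm_le_bound _ hc fun z => ?_
  rw [← pow_le_pow_iff_left₀ (norm_nonneg _) (by positivity) two_ne_zero, mul_pow,
    WithLp.prod_norm_sq_eq_of_L2]
  have hz : WithLp.inlL 2 ℂ E1 E2 z.fst + WithLp.inrL 2 ℂ E1 E2 z.snd = z :=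
    WithLp.inlL_add_inrL _ _
  simpa [blockLowerTriangular_apply, ← map_add, hz] using h z

end Block

theorem q_intertwining_isometric_lift_step_general {H H' H2 H2' : Type*}
    [NormedAddCommGroup H] [InnerProductSpace ℂ H] [CompleteSpace H]
    [NormedAddCommGroup H'] [InnerProductSpace ℂ H'] [CompleteSpace H']
    [NormedAddCommGroup H2] [InnerProductSpace ℂ H2] [CompleteSpace H2]
    [NormedAddCommGroup H2'] [InnerProductSpace ℂ H2'] [CompleteSpace H2']
    (T : H →L[ℂ] H) (T' : H' →L[ℂ] H') (T2 : H →L[ℂ] H')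
    (S : H →L[ℂ] H2) (S' : H' →L[ℂ] H2')
    (hint : T2 ∘L T = T' ∘L T2)
    (hV : adjoint T ∘L T + adjoint S ∘L S = 1)
    (hV' : adjoint T' ∘L T' + adjoint S' ∘L S' = 1) :
    ∃ (A : H →L[ℂ] H2') (B : H2 →L[ℂ] H2'),
      A ∘L T + B ∘L S = S' ∘L T2 ∧
      blockLowerTriangular T2 A B ∘L blockLowerTriangular T S (0 : H2 →L[ℂ] H2) =
        blockLowerTriangular T' S' (0 : H2' →L[ℂ] H2') ∘L blockLowerTriangular T2 A B ∧
      ‖blockLowerTriangular T2 A B‖ = ‖T2‖ := by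
  let W : WithLp 2 (H × H2) →L[ℂ] H' := T2 ∘L WithLp.fstL 2 ℂ H H2
  let V : H →L[ℂ] WithLp 2 (H × H2) := WithLp.inlL 2 ℂ H H2 ∘L T + WithLp.inrL 2 ℂ H H2 ∘L S
  have hV_apply : ∀ x, V x = WithLp.toLp 2 (T x, S x) := fun x => WithLp.inlL_add_inrL _ _
  have hW : ‖W‖ ≤ ‖T2‖ := opNorm_le_bound _ (norm_nonneg _) fun z =>
    (T2.le_opNorm _).trans (by gcongr; exact WithLp.norm_fst_le _ z)
  have hWV : ∀ x, W (V x) = T' (T2 x) := fun x => by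
    simpa [W, hV_apply] using DFunLike.congr_fun hint x
  have hV_norm : ∀ x, ‖V x‖ ^ 2 = ‖x‖ ^ 2 := fun x => by
    rw [hV_apply, WithLp.prod_norm_sq_eq_of_L2]
    exact norm_sq_add_norm_sq_of_adjoint_comp_add_adjoint_comp_eq_one hV x
  obtain ⟨R, hRV, hR⟩ := W.exists_comp_eq_of_norm_sq_add_norm_sq_le V (S' ∘L T2) hW fun x =>
    calc ‖W (V x)‖ ^ 2 + ‖S' (T2 x)‖ ^ 2 = ‖T2 x‖ ^ 2 := by
          rw [hWV]; exact norm_sq_add_norm_sq_of_adjoint_comp_add_adjoint_comp_eq_one hV' (T2 x)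
      _ ≤ ‖T2‖ ^ 2 * ‖V x‖ ^ 2 := by
          rw [hV_norm, ← mul_pow]; gcongr; exact T2.le_opNorm x
  have hAB : R ∘L WithLp.inlL 2 ℂ H H2 ∘L T + R ∘L WithLp.inrL 2 ℂ H H2 ∘L S = S' ∘L T2 := by
    rw [← hRV, comp_add]
  refine ⟨R ∘L WithLp.inlL 2 ℂ H H2, R ∘L WithLp.inrL 2 ℂ H H2, hAB, ?_, ?_⟩
  · simp only [blockLowerTriangular_comp, hint, comp_assoc, hAB, comp_zero, zero_comp, add_zero]
  · exact le_antisymm (norm_blockLowerTriangular_comp_inlL_comp_inrL_le _ _ (norm_nonneg _) hR)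
      (norm_le_norm_blockLowerTriangular _ _ _)

theorem q_intertwining_isometric_lift_step {H H' H2 H2' : Type*}
    [NormedAddCommGroup H] [InnerProductSpace ℂ H] [CompleteSpace H]
    [NormedAddCommGroup H'] [InnerProductSpace ℂ H'] [CompleteSpace H']
    [NormedAddCommGroup H2] [InnerProductSpace ℂ H2] [CompleteSpace H2]
    [NormedAddCommGroup H2'] [InnerProductSpace ℂ H2'] [CompleteSpace H2']
    (T : H →L[ℂ] H) (T' : H' →L[ℂ] H') (T2 : H →L[ℂ] H')
    (S : H →L[ℂ] H2) (S' : H' →L[ℂ] H2')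
    (hT : ‖T‖ ≤ 1) (hT' : ‖T'‖ ≤ 1) (hT2 : ‖T2‖ ≤ 1)
    (hint : T2 ∘L T = T' ∘L T2)
    (hV : adjoint T ∘L T + adjoint S ∘L S = 1)
    (hV' : adjoint T' ∘L T' + adjoint S' ∘L S' = 1) :
    ∃ (A : H →L[ℂ] H2') (B : H2 →L[ℂ] H2'),
      A ∘L T + B ∘L S = S' ∘L T2 ∧
      blockLowerTriangular T2 A B ∘L blockLowerTriangular T S (0 : H2 →L[ℂ] H2) =
        blockLowerTriangular T' S' (0 : H2' →L[ℂ] H2') ∘L blockLowerTriangular T2 A B ∧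
      ‖blockLowerTriangular T2 A B‖ = ‖T2‖ :=
  q_intertwining_isometric_lift_step_general T T' T2 S S' hint hV hV'
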